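/- Let T be a finite tree and let v be a vertex of T adjacent to two distinct leaves x and y. Then \u03b3_2(T - x) = \u03b3_2(T). -/

import Mathlib

open SimpleGraph

universe u v

namespace EternalDom

variable {V : Type u} {W : Type v}

/-- `x` is within distance `k` of `y` in `G` (in particular, a path between them exists). -/
def WithinDist (G : SimpleGraph V) (k : ℕ) (x y : V) : Prop :=
  G.Reachable x y ∧ G.dist x y ≤ k

/-- A multiset of guards is distance-`k` dominating: every vertex is within
distance `k` of some guard. -/
def IsDistKDomMultiset (G : SimpleGraph V) (k : ℕ) (D : Multiset V) : Prop :=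
  ∀ w : V, ∃ x ∈ D, WithinDist G k x w

/-- `F` is an eternal distance-`k` defence family of guard configurations of size `m`:
a nonempty family of distance-`k` dominating multisets, all of cardinality `m`, such that
for every configuration `D ∈ F` and every attacked vertex `w` there is a configuration
`D' ∈ F` containing `w` that is obtained from `D` by a matching (bijection) moving each
guard a distance of at most `k`. -/
def IsEternalFamily (G : SimpleGraph V) (k m : ℕ) (F : Set (Multiset V)) : Prop :=
  F.Nonempty ∧
    (∀ D ∈ F, Multiset.card D = m ∧ IsDistKDomMultiset G k D) ∧
    (∀ D ∈ F, ∀ w : V, ∃ D' ∈ F, w ∈ D' ∧ Multiset.Rel (WithinDist G k) D D')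

/-- The eternal distance-`k` domination number `γ^∞_{all,k}(G)`. -/
noncomputable def eternalNum (G : SimpleGraph V) (k : ℕ) : ℕ :=
  sInf {m | ∃ F : Set (Multiset V), IsEternalFamily G k m F}

/-- `x` dominates `w`: they are equal or adjacent. -/
def Dominates (G : SimpleGraph V) (x w : V) : Prop := w = x ∨ G.Adj x w

/-- A dominating set of vertices. -/
def IsDomSet (G : SimpleGraph V) (D : Set V) : Prop := ∀ w : V, ∃ x ∈ D, Dominates G x w

/-- The domination number `γ(G)`. -/
noncomputable def domNum (G : SimpleGraph V) : ℕ :=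
  sInf {n | ∃ D : Set V, IsDomSet G D ∧ D.ncard = n}

/-- A distance-`k` dominating set of vertices. -/
def IsDistKDomSet (G : SimpleGraph V) (k : ℕ) (D : Set V) : Prop :=
  ∀ w : V, ∃ x ∈ D, WithinDist G k x w

/-- The distance-`k` domination number `γ_k(G)`. -/
noncomputable def distDomNum (G : SimpleGraph V) (k : ℕ) : ℕ :=
  sInf {n | ∃ D : Set V, IsDistKDomSet G k D ∧ D.ncard = n}

/-- A leaf: a vertex of degree 1, i.e. with a unique neighbour. -/
def IsLeafV (G : SimpleGraph V) (x : V) : Prop := ∃! y, G.Adj x y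

/-- A stem: a vertex adjacent to at least one leaf. -/
def IsStem (G : SimpleGraph V) (x : V) : Prop := ∃ y, G.Adj x y ∧ IsLeafV G y

/-- `k`-leaves: a `0`-leaf is a leaf; for `k > 0`, `v` is a `k`-leaf iff `v` is adjacent to
some `(k-1)`-leaf and all but at most one of the neighbours of `v` are `t`-leaves for some
`t < k`. -/
def IsKLeaf (G : SimpleGraph V) : ℕ → V → Prop
  | 0, v => IsLeafV G v
  | (k + 1), v =>
      (∃ u, G.Adj v u ∧ IsKLeaf G k u) ∧
        ∃ w : V, ∀ x : V, G.Adj v x → x ≠ w → ∃ t, ∃ _ : t ≤ k, IsKLeaf G t x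
  termination_by k _ => k
  decreasing_by all_goals omega

/-- For a 2-leaf `v`, the set `L(v)`: the union of `L[u]` over all neighbours `u` of `v`
which are 0-leaves or 1-leaves, where for a 1-leaf `u`, `L[u]` consists of `u` and the leaves
adjacent to `u`. -/
def Lopen (G : SimpleGraph V) (v : V) : Set V :=
  {x | ∃ u, G.Adj v u ∧
    ((IsKLeaf G 0 u ∧ x = u) ∨
      (IsKLeaf G 1 u ∧ (x = u ∨ (G.Adj u x ∧ IsKLeaf G 0 x))))}

/-- For a 2-leaf `v`, the set `L[v] = L(v) ∪ {v}`. -/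
def Lclosed (G : SimpleGraph V) (v : V) : Set V := insert v (Lopen G v)

/-- A graph is eternal distance-2 domination critical if deleting any non-cut vertex
(one whose removal leaves the graph connected) strictly decreases the eternal
distance-2 domination number. -/
def EternalCritical (G : SimpleGraph V) : Prop :=
  ∀ x : V, (G.induce {y | y ≠ x}).Connected →
    eternalNum (G.induce {y | y ≠ x}) 2 < eternalNum G 2

/-- Attach a pendant path `x₁ x₂ … xₙ` on `n` new vertices to the vertex `y`,
via the edge `y x₁`. -/
def attachPath (G : SimpleGraph V) (y : V) (n : ℕ) : SimpleGraph (V ⊕ Fin n) :=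
  G.map Sum.inl ⊔ (pathGraph n).map Sum.inr ⊔
    fromEdgeSet {e | ∃ h : 0 < n, e = s(Sum.inl y, Sum.inr ⟨0, h⟩)}

/-- The star `K_{1,m}`: centre `0`, leaves the `m` nonzero elements of `Fin (m+1)`. -/
def starGraph (m : ℕ) : SimpleGraph (Fin (m + 1)) where
  Adj x y := (x = 0 ∧ y ≠ 0) ∨ (y = 0 ∧ x ≠ 0)
  symm := by tauto
  loopless := ⟨by rintro x (⟨h1, h2⟩ | ⟨h1, h2⟩) <;> exact h2 h1⟩

/-- Disjoint union of `G` and the star `K_{1,m}` together with one edge joining the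
vertex `a` of the star to the vertex `y` of `G`. -/
def attachStar (G : SimpleGraph V) (y : V) (m : ℕ) (a : Fin (m + 1)) :
    SimpleGraph (V ⊕ Fin (m + 1)) :=
  G.map Sum.inl ⊔ (starGraph m).map Sum.inr ⊔
    fromEdgeSet {s(Sum.inl y, Sum.inr a)}

/-- From `G` and a vertex `v`: add a new star `K_{1,m}` joined by an edge from its centre
to `v`, together with `t` new leaves adjacent to `v`. -/
def addStarAndLeaves (G : SimpleGraph V) (v : V) (m t : ℕ) :
    SimpleGraph (V ⊕ (Fin (m + 1) ⊕ Fin t)) :=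
  G.map Sum.inl ⊔
    (starGraph m).map (Sum.inr ∘ Sum.inl) ⊔
    fromEdgeSet ({s(Sum.inl v, Sum.inr (Sum.inl 0))} ∪
      {e | ∃ i : Fin t, e = s(Sum.inl v, Sum.inr (Sum.inr i))})

/-- From `G` and a vertex `v`: add two new stars `K_{1,m}` and `K_{1,M}`, joining the
centre of each new star to `v` by an edge. -/
def addTwoStars (G : SimpleGraph V) (v : V) (m M : ℕ) :
    SimpleGraph (V ⊕ (Fin (m + 1) ⊕ Fin (M + 1))) :=
  G.map Sum.inl ⊔
    (starGraph m).map (Sum.inr ∘ Sum.inl) ⊔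
    (starGraph M).map (Sum.inr ∘ Sum.inr) ⊔
    fromEdgeSet {s(Sum.inl v, Sum.inr (Sum.inl 0)), s(Sum.inl v, Sum.inr (Sum.inr 0))}

/-- The 1-sum of `G` and `H` at the vertex `u` of `G` and the vertex `w` of `H`:
the disjoint union of `G` and `H` with `u` and `w` identified. -/
def oneSum (G : SimpleGraph V) (H : SimpleGraph W) (u : V) (w : W) :
    SimpleGraph (V ⊕ {x : W // x ≠ w}) where
  Adj x y :=
    match x, y with
    | Sum.inl a, Sum.inl b => G.Adj a b
    | Sum.inr a, Sum.inr b => H.Adj a.1 b.1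
    | Sum.inl a, Sum.inr b => a = u ∧ H.Adj w b.1
    | Sum.inr a, Sum.inl b => b = u ∧ H.Adj w a.1
  symm := ⟨by
    rintro (a | a) (b | b) h
    · exact h.symm
    · exact h
    · exact h
    · exact h.symm⟩
  loopless := ⟨by
    rintro (a | a) h
    · exact G.loopless.irrefl a h
    · exact H.loopless.irrefl a.1 h⟩


/-! A shortest walk between two vertices other than a leaf `x` never passes through `x`, so
`T - x` keeps all distances of `T`. Hence moving a guard from `x` to its neighbour `v` turns a
distance-2 dominating set of `T` into one of `T - x`. Conversely, a dominating set of `T - x`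
already dominates `x`: the guard that reaches its twin `y` reaches `x` as well, by trading the
last step `v y` for `v x`. -/

section DistDomination

variable {G : SimpleGraph V} {k : ℕ}

lemma withinDist_iff_exists_walk {a b : V} :
    WithinDist G k a b ↔ ∃ p : G.Walk a b, p.length ≤ k := by
  constructor
  · rintro ⟨hr, hd⟩
    obtain ⟨p, hp⟩ := hr.exists_walk_length_eq_dist
    exact ⟨p, hp ▸ hd⟩
  · rintro ⟨p, hp⟩
    exact ⟨⟨p⟩, (dist_le p).trans hp⟩

lemma WithinDist.symm {a b : V} (h : WithinDist G k a b) : WithinDist G k b a := by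
  obtain ⟨p, hp⟩ := withinDist_iff_exists_walk.mp h
  exact withinDist_iff_exists_walk.mpr ⟨p.reverse, by simpa using hp⟩

lemma WithinDist.of_induce {s : Set V} {a b : s} (h : WithinDist (G.induce s) k a b) :
    WithinDist G k a b := by
  obtain ⟨p, hp⟩ := withinDist_iff_exists_walk.mp h
  exact withinDist_iff_exists_walk.mpr
    ⟨p.map (Embedding.induce s).toHom, (p.length_map _).trans_le hp⟩

lemma IsLeafV.exists_walk_of_adj {x v w : V} (hxl : IsLeafV G x) (hx : G.Adj x v)
    (hw : w ≠ x) (p : G.Walk x w) : ∃ q : G.Walk v w, q.length + 1 = p.length := by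
  cases p with
  | nil => exact absurd rfl hw
  | cons h q =>
    obtain rfl := hxl.unique h hx
    exact ⟨q, rfl⟩

lemma IsLeafV.withinDist_of_adj {x v w : V} (hxl : IsLeafV G x) (hx : G.Adj x v)
    (hw : w ≠ x) (h : WithinDist G k x w) : WithinDist G k v w := by
  obtain ⟨p, hp⟩ := withinDist_iff_exists_walk.mp h
  obtain ⟨q, hq⟩ := hxl.exists_walk_of_adj hx hw p
  exact withinDist_iff_exists_walk.mpr ⟨q, by omega⟩

lemma IsLeafV.withinDist_of_twin {x y v d : V} (hyl : IsLeafV G y) (hy : G.Adj y v)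
    (hx : G.Adj x v) (hd : d ≠ y) (h : WithinDist G k y d) : WithinDist G k x d := by
  obtain ⟨p, hp⟩ := withinDist_iff_exists_walk.mp h
  obtain ⟨q, hq⟩ := hyl.exists_walk_of_adj hy hd p
  exact withinDist_iff_exists_walk.mpr ⟨q.cons hx, by rw [Walk.length_cons]; omega⟩

lemma IsLeafV.notMem_support_of_isPath {x a b : V} (hxl : IsLeafV G x) {p : G.Walk a b}
    (hp : p.IsPath) (ha : a ≠ x) (hb : b ≠ x) : x ∉ p.support := by
  intro hmem
  obtain ⟨n, hn, hnl⟩ := Walk.mem_support_iff_exists_getVert.mp hmem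
  have hn0 : n ≠ 0 := by rintro rfl; exact ha (by simpa using hn)
  have hnl' : n ≠ p.length := by rintro rfl; exact hb (by simpa using hn)
  have hpred := p.adj_getVert_succ (i := n - 1) (by omega)
  have hsucc := p.adj_getVert_succ (i := n) (by omega)
  rw [Nat.sub_add_cancel (Nat.pos_of_ne_zero hn0), hn] at hpred
  rw [hn] at hsucc
  have := hp.getVert_injOn (show n - 1 ≤ p.length by omega)
    (show n + 1 ≤ p.length by omega)
    (hxl.unique hpred.symm hsucc)
  omega

lemma IsLeafV.withinDist_induce {x a b : V} (hxl : IsLeafV G x) (ha : a ≠ x) (hb : b ≠ x)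
    (h : WithinDist G k a b) :
    WithinDist (G.induce {z | z ≠ x}) k ⟨a, ha⟩ ⟨b, hb⟩ := by
  classical
  obtain ⟨p, hp⟩ := withinDist_iff_exists_walk.mp h
  have havoid : ∀ z ∈ p.bypass.support, z ∈ {z | z ≠ x} := fun z hz hzx =>
    hxl.notMem_support_of_isPath p.bypass_isPath ha hb (hzx ▸ hz)
  refine withinDist_iff_exists_walk.mpr ⟨p.bypass.induce _ havoid, ?_⟩
  calc (p.bypass.induce _ havoid).length
      = ((p.bypass.induce _ havoid).map (Embedding.induce _).toHom).length :=
        (Walk.length_map _ _).symm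
    _ = p.bypass.length := congrArg Walk.length (p.bypass.map_induce havoid)
    _ ≤ k := p.length_bypass_le_length.trans hp

lemma isDistKDomSet_univ (G : SimpleGraph V) (k : ℕ) : IsDistKDomSet G k Set.univ :=
  fun w => ⟨w, trivial, withinDist_iff_exists_walk.mpr ⟨.nil, Nat.zero_le k⟩⟩

lemma distDomNum_le_ncard {D : Set V} (hD : IsDistKDomSet G k D) : distDomNum G k ≤ D.ncard :=
  Nat.sInf_le ⟨D, hD, rfl⟩

lemma exists_isDistKDomSet_ncard_eq_distDomNum (G : SimpleGraph V) (k : ℕ) :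
    ∃ D, IsDistKDomSet G k D ∧ D.ncard = distDomNum G k :=
  Nat.sInf_mem (s := {n | ∃ D : Set V, IsDistKDomSet G k D ∧ D.ncard = n})
    ⟨_, Set.univ, isDistKDomSet_univ G k, rfl⟩

lemma distDomNum_le_of_image [Finite V] {H : SimpleGraph W} (f : V → W)
    (hf : ∀ D, IsDistKDomSet G k D → IsDistKDomSet H k (f '' D)) :
    distDomNum H k ≤ distDomNum G k := by
  obtain ⟨D, hD, hcard⟩ := exists_isDistKDomSet_ncard_eq_distDomNum G k
  calc distDomNum H k ≤ (f '' D).ncard := distDomNum_le_ncard (hf D hD)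
    _ ≤ D.ncard := Set.ncard_image_le (Set.toFinite D)
    _ = distDomNum G k := hcard

def retractVertex [DecidableEq V] {x v : V} (hv : v ≠ x) (d : V) : {z | z ≠ x} :=
  if h : d = x then ⟨v, hv⟩ else ⟨d, h⟩

lemma IsLeafV.isDistKDomSet_image_retractVertex [DecidableEq V] {x v : V} (hxl : IsLeafV G x)
    (hx : G.Adj x v) {D : Set V} (hD : IsDistKDomSet G k D) :
    IsDistKDomSet (G.induce {z | z ≠ x}) k (retractVertex hx.ne' '' D) := by
  rintro ⟨w, hw⟩
  obtain ⟨d, hdD, hd⟩ := hD w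
  refine ⟨_, Set.mem_image_of_mem _ hdD, ?_⟩
  by_cases hdx : d = x
  · subst hdx
    simpa [retractVertex] using hxl.withinDist_induce hx.ne' hw (hxl.withinDist_of_adj hx hw hd)
  · simpa [retractVertex, hdx] using hxl.withinDist_induce hdx hw hd

lemma isDistKDomSet_image_val_of_twin {x y v : V} (hk : 2 ≤ k) (hxy : x ≠ y)
    (hx : G.Adj x v) (hyl : IsLeafV G y) (hy : G.Adj y v) {D : Set {z | z ≠ x}}
    (hD : IsDistKDomSet (G.induce {z | z ≠ x}) k D) : IsDistKDomSet G k (Subtype.val '' D) := by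
  intro w
  by_cases hw : w = x
  · subst hw
    obtain ⟨d, hdD, hd⟩ := hD ⟨y, hxy.symm⟩
    refine ⟨d, Set.mem_image_of_mem _ hdD, ?_⟩
    by_cases hdy : d.1 = y
    · rw [hdy]
      exact withinDist_iff_exists_walk.mpr ⟨.cons hy (.cons hx.symm .nil), hk⟩
    · exact (hyl.withinDist_of_twin hy hx hdy hd.of_induce.symm).symm
  · obtain ⟨d, hdD, hd⟩ := hD ⟨w, hw⟩
    exact ⟨d, Set.mem_image_of_mem _ hdD, hd.of_induce⟩

end DistDomination

theorem distDomNum_delete_twin_leaf_general {V : Type u} [Fintype V] (G : SimpleGraph V)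
    (v x y : V) (hxy : x ≠ y) (hx : G.Adj v x) (hxl : IsLeafV G x)
    (hy : G.Adj v y) (hyl : IsLeafV G y) :
    distDomNum (G.induce {z | z ≠ x}) 2 = distDomNum G 2 := by
  classical
  apply le_antisymm
  · exact distDomNum_le_of_image (retractVertex hx.ne)
      fun D hD => hxl.isDistKDomSet_image_retractVertex hx.symm hD
  · exact distDomNum_le_of_image Subtype.val
      fun D hD => isDistKDomSet_image_val_of_twin le_rfl hxy hx.symm hyl hy.symm hD

/-- deleting one of two leaves sharing a common neighbour does not change
the distance-2 domination number of a tree. -/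
theorem distDomNum_delete_twin_leaf {V : Type u} [Fintype V] (G : SimpleGraph V)
    (hG : G.IsTree) (v x y : V) (hxy : x ≠ y) (hx : G.Adj v x) (hxl : IsLeafV G x)
    (hy : G.Adj v y) (hyl : IsLeafV G y) :
    distDomNum (G.induce {z | z ≠ x}) 2 = distDomNum G 2 :=
  distDomNum_delete_twin_leaf_general G v x y hxy hx hxl hy hyl

end EternalDom
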